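/- (Proposition 2.) Let (A^F, R^F, A^?, R^?) be an incomplete AF, let v_IAF = AW_{A^F} ∪ ATT_{R^F}, and let makeComp^IAF = mkTrueSome(AW_{A^?}); mkTrueSome(ATT_{R^?}). Then: (i) if (v_IAF, v) ∈ ‖makeComp^IAF‖ then (A_v, R_v) is a completion of (A^F, R^F, A^?, R^?); and (ii) for every completion (A*, R*) of (A^F, R^F, A^?, R^?) there is a valuation v with (v_IAF, v) ∈ ‖makeComp^IAF‖ and (A_v, R_v) = (A*, R*). -/
import Mathlib


noncomputable section

namespace DLPA

/-- Propositional variables: awareness, acceptance, attack, auxiliary acceptance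
copies, plus countably many further auxiliary variables. -/
inductive PVar (U : Type) : Type
  | aw : U → PVar U
  | inn : U → PVar U
  | att : U → U → PVar U
  | inn' : U → PVar U
  | aux : Nat → PVar U

-- DL-PA formulas and programs, by mutual recursion.
mutual
  inductive Form (U : Type) : Type
    | var : PVar U → Form U
    | neg : Form U → Form U
    | conj : Form U → Form U → Form U
    | box : Prog U → Form U → Form U
  inductive Prog (U : Type) : Type
    | add : PVar U → Prog U           -- +p
    | rem : PVar U → Prog U           -- −p
    | test : Form U → Prog U          -- φ?
    | seq : Prog U → Prog U → Prog U
    | choice : Prog U → Prog U → Prog U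
    | conv : Prog U → Prog U
end

variable {U : Type}

/-- A valuation is a set of propositional variables. -/
abbrev Val (U : Type) := Set (PVar U)

-- Satisfaction of formulas and interpretation of programs, by mutual recursion.
mutual
  def Sat : Val U → Form U → Prop
    | v, Form.var p => p ∈ v
    | v, Form.neg φ => ¬ Sat v φ
    | v, Form.conj φ ψ => Sat v φ ∧ Sat v ψ
    | v, Form.box π φ => ∀ w, Rel π v w → Sat w φ
  def Rel : Prog U → Val U → Val U → Prop
    | Prog.add p, v, w => w = v ∪ {p}
    | Prog.rem p, v, w => w = v \ {p}
    | Prog.test φ, v, w => w = v ∧ Sat v φ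
    | Prog.seq π₁ π₂, v, w => ∃ u, Rel π₁ v u ∧ Rel π₂ u w
    | Prog.choice π₁ π₂, v, w => Rel π₁ v w ∨ Rel π₂ v w
    | Prog.conv π, v, w => Rel π w v
end

def Form.falsum : Form U := Form.conj (Form.var (PVar.aux 0)) (Form.neg (Form.var (PVar.aux 0)))
def Form.top : Form U := Form.neg Form.falsum
def Form.impl (φ ψ : Form U) : Form U := Form.neg (Form.conj φ (Form.neg ψ))
def Form.disj (φ ψ : Form U) : Form U := Form.neg (Form.conj (Form.neg φ) (Form.neg ψ))
def Form.equiv (φ ψ : Form U) : Form U := Form.conj (Form.impl φ ψ) (Form.impl ψ φ)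
def Form.dia (π : Prog U) (φ : Form U) : Form U := Form.neg (Form.box π (Form.neg φ))
def Prog.skip : Prog U := Prog.test Form.top

/-- Sequential composition of a list of programs (`skip` for the empty list). -/
def seqList {β : Type} (f : β → Prog U) : List β → Prog U
  | [] => Prog.skip
  | p :: ps => Prog.seq (f p) (seqList f ps)

/-- Nondeterministic composition of a list of programs (`skip` for the empty list). -/
def unionList {β : Type} (f : β → Prog U) : List β → Prog U
  | [] => Prog.skip
  | [p] => f p
  | p :: ps => Prog.choice (f p) (unionList f ps)

def mkTrueOne (L : List (PVar U)) : Prog U :=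
  unionList (fun p => Prog.seq (Prog.test (Form.neg (Form.var p))) (Prog.add p)) L
def mkFalseOne (L : List (PVar U)) : Prog U :=
  unionList (fun p => Prog.seq (Prog.test (Form.var p)) (Prog.rem p)) L
def mkTrueSome (L : List (PVar U)) : Prog U :=
  seqList (fun p => Prog.choice (Prog.add p) Prog.skip) L
def mkFalseSome (L : List (PVar U)) : Prog U :=
  seqList (fun p => Prog.choice (Prog.rem p) Prog.skip) L
def vary (L : List (PVar U)) : Prog U :=
  seqList (fun p => Prog.choice (Prog.add p) (Prog.rem p)) L
/-- dis(ATT_R): for each pair (x,y) in the list, make true att_{x,y} or att_{y,x}. -/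
def dis (L : List (U × U)) : Prog U :=
  seqList (fun q => Prog.choice (Prog.add (PVar.att q.1 q.2)) (Prog.add (PVar.att q.2 q.1))) L

def conjList : List (Form U) → Form U
  | [] => Form.top
  | φ :: φs => Form.conj φ (conjList φs)
def disjList : List (Form U) → Form U
  | [] => Form.falsum
  | φ :: φs => Form.disj φ (disjList φs)

/-- The elements of a finite universe in a fixed order. -/
def enum (U : Type) [Fintype U] : List U := Finset.univ.toList

def bigConj [Fintype U] (f : U → Form U) : Form U := conjList ((enum U).map f)
def bigDisj [Fintype U] (f : U → Form U) : Form U := disjList ((enum U).map f)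

def INlist (U : Type) [Fintype U] : List (PVar U) := (enum U).map PVar.inn

/-- copy(IN_U) copies the value of in_x to in'_x, for every x ∈ U. -/
def copyIN (U : Type) [Fintype U] : Prog U :=
  seqList (fun x => Prog.choice
      (Prog.seq (Prog.test (Form.var (PVar.inn x))) (Prog.add (PVar.inn' x)))
      (Prog.seq (Prog.test (Form.neg (Form.var (PVar.inn x)))) (Prog.rem (PVar.inn' x))))
    (enum U)

def Well (U : Type) [Fintype U] : Form U :=
  bigConj (fun x => Form.impl (Form.var (PVar.inn x)) (Form.var (PVar.aw x)))

def ConFree (U : Type) [Fintype U] : Form U :=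
  Form.conj (Well U) (bigConj fun x => bigConj fun y =>
    Form.neg (Form.conj (Form.var (PVar.inn x))
      (Form.conj (Form.var (PVar.inn y)) (Form.var (PVar.att x y)))))

def AdmissibleF (U : Type) [Fintype U] : Form U :=
  Form.conj (ConFree U) (bigConj fun x => Form.impl (Form.var (PVar.inn x))
    (bigConj fun y => Form.impl (Form.conj (Form.var (PVar.aw y)) (Form.var (PVar.att y x)))
      (bigDisj fun z => Form.conj (Form.var (PVar.inn z)) (Form.var (PVar.att z y)))))

def StableF (U : Type) [Fintype U] : Form U :=
  Form.conj (Well U) (bigConj fun x => Form.impl (Form.var (PVar.aw x))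
    (Form.equiv (Form.var (PVar.inn x))
      (Form.neg (bigDisj fun y => Form.conj (Form.var (PVar.inn y)) (Form.var (PVar.att y x))))))

def CompleteF (U : Type) [Fintype U] : Form U :=
  Form.conj (ConFree U) (bigConj fun x => Form.equiv (Form.var (PVar.inn x))
    (bigConj fun y => Form.impl (Form.conj (Form.var (PVar.aw y)) (Form.var (PVar.att y x)))
      (bigDisj fun z => Form.conj (Form.var (PVar.inn z)) (Form.var (PVar.att z y)))))

def GroundedF (U : Type) [Fintype U] : Form U :=
  Form.conj (CompleteF U)
    (Form.box (Prog.seq (mkFalseOne (INlist U)) (mkFalseSome (INlist U))) (Form.neg (CompleteF U)))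

def PreferredF (U : Type) [Fintype U] : Form U :=
  Form.conj (AdmissibleF U)
    (Form.box (Prog.seq (mkTrueOne (INlist U)) (mkTrueSome (INlist U))) (Form.neg (AdmissibleF U)))

def NaiveF (U : Type) [Fintype U] : Form U :=
  Form.conj (ConFree U) (Form.box (mkTrueOne (INlist U)) (Form.neg (ConFree U)))

def IncludedInCp (U : Type) [Fintype U] : Form U :=
  bigConj fun x => Form.impl
    (Form.disj (Form.var (PVar.inn x)) (Form.conj (Form.var (PVar.aw x))
      (bigDisj fun y => Form.conj (Form.var (PVar.inn y)) (Form.var (PVar.att y x)))))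
    (Form.disj (Form.var (PVar.inn' x)) (Form.conj (Form.var (PVar.aw x))
      (bigDisj fun y => Form.conj (Form.var (PVar.inn' y)) (Form.var (PVar.att y x)))))

def IncludesCp (U : Type) [Fintype U] : Form U :=
  bigConj fun x => Form.impl
    (Form.disj (Form.var (PVar.inn' x)) (Form.conj (Form.var (PVar.aw x))
      (bigDisj fun y => Form.conj (Form.var (PVar.inn' y)) (Form.var (PVar.att y x)))))
    (Form.disj (Form.var (PVar.inn x)) (Form.conj (Form.var (PVar.aw x))
      (bigDisj fun y => Form.conj (Form.var (PVar.inn y)) (Form.var (PVar.att y x)))))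

/-- makeExt^σ = vary(IN_U); φ_σ? -/
def makeExt (U : Type) [Fintype U] (φ : Form U) : Prog U :=
  Prog.seq (vary (INlist U)) (Prog.test φ)

def SemiStableF (U : Type) [Fintype U] : Form U :=
  Form.conj (CompleteF U)
    (Form.box (Prog.seq (copyIN U) (makeExt U (CompleteF U)))
      (Form.impl (IncludesCp U) (IncludedInCp U)))

/-- A_v -/
def Av (v : Val U) : Set U := {x | PVar.aw x ∈ v}
/-- R_v -/
def Rv (v : Val U) : Set (U × U) := {q | q.1 ∈ Av v ∧ q.2 ∈ Av v ∧ PVar.att q.1 q.2 ∈ v}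
/-- E(v) -/
def Ev (v : Val U) : Set U := {x | PVar.inn x ∈ v}
/-- {x ∈ U : in'_x ∈ v} -/
def Cv (v : Val U) : Set U := {x | PVar.inn' x ∈ v}
/-- v_(A,R) = AW_A ∪ ATT_R -/
def valOf (A : Set U) (R : Set (U × U)) : Val U :=
  (PVar.aw '' A) ∪ ((fun q : U × U => PVar.att q.1 q.2) '' R)

/-- E⁺, the set of arguments of A attacked by E in (A,R). -/
def attacked (A : Set U) (R : Set (U × U)) (E : Set U) : Set U :=
  {x ∈ A | ∃ y ∈ E, (y, x) ∈ R}
/-- E⊕ = E ∪ E⁺, the range of E. -/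
def rangeOf (A : Set U) (R : Set (U × U)) (E : Set U) : Set U :=
  E ∪ attacked A R E

def IsConflictFree (A : Set U) (R : Set (U × U)) (E : Set U) : Prop :=
  E ⊆ A ∧ E ∩ attacked A R E = ∅
def Defends (A : Set U) (R : Set (U × U)) (E : Set U) (a : U) : Prop :=
  ∀ x ∈ A, (x, a) ∈ R → x ∈ attacked A R E
def IsAdmissibleExt (A : Set U) (R : Set (U × U)) (E : Set U) : Prop :=
  IsConflictFree A R E ∧ ∀ a ∈ E, Defends A R E a
def IsStableExt (A : Set U) (R : Set (U × U)) (E : Set U) : Prop :=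
  IsConflictFree A R E ∧ A \ E ⊆ attacked A R E
def IsCompleteExt (A : Set U) (R : Set (U × U)) (E : Set U) : Prop :=
  IsConflictFree A R E ∧ E = {a ∈ A | Defends A R E a}
def IsGroundedExt (A : Set U) (R : Set (U × U)) (E : Set U) : Prop :=
  IsCompleteExt A R E ∧ ∀ E', IsCompleteExt A R E' → E' ⊆ E → E' = E
def IsPreferredExt (A : Set U) (R : Set (U × U)) (E : Set U) : Prop :=
  IsCompleteExt A R E ∧ ∀ E', IsCompleteExt A R E' → E ⊆ E' → E' = E
def IsNaiveExt (A : Set U) (R : Set (U × U)) (E : Set U) : Prop :=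
  IsConflictFree A R E ∧ ∀ E', IsConflictFree A R E' → E ⊆ E' → E' = E
def IsSemiStableExt (A : Set U) (R : Set (U × U)) (E : Set U) : Prop :=
  IsCompleteExt A R E ∧ ¬ ∃ E', IsCompleteExt A R E' ∧ rangeOf A R E ⊂ rangeOf A R E'

end DLPA

end

noncomputable section
open DLPA

/-- The list of awareness variables of a finite set of arguments, in a fixed order. -/
def AWlist {U : Type} (A : Finset U) : List (PVar U) := A.toList.map PVar.aw
/-- The list of attack variables of a finite attack relation, in a fixed order. -/
def ATTlist {U : Type} (R : Finset (U × U)) : List (PVar U) :=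
  R.toList.map (fun q => PVar.att q.1 q.2)

/-- The defining conditions of an incomplete AF (A^F, R^F, A^?, R^?). -/
def IAFConds {U : Type} (AF Aq : Set U) (RF Rq : Set (U × U)) : Prop :=
  Disjoint AF Aq ∧ Disjoint RF Rq ∧
    RF ⊆ (AF ∪ Aq) ×ˢ (AF ∪ Aq) ∧ Rq ⊆ (AF ∪ Aq) ×ˢ (AF ∪ Aq)

/-- (A*, R*) is a completion of the IAF (A^F, R^F, A^?, R^?). -/
def IsCompletionOfIAF {U : Type} (AF Aq : Set U) (RF Rq : Set (U × U))
    (As : Set U) (Rs : Set (U × U)) : Prop :=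
  AF ⊆ As ∧ As ⊆ AF ∪ Aq ∧
    RF ∩ As ×ˢ As ⊆ Rs ∧ Rs ⊆ (RF ∪ Rq) ∩ As ×ˢ As

end

open DLPA

lemma sat_top {U : Type} (v : Val U) : Sat v Form.top := by
  simp [Sat, Form.top, Form.falsum]

lemma mkTrueSome_iff {U : Type} (L : List (PVar U)) (v w : Val U) :
    DLPA.Rel (mkTrueSome L) v w ↔ v ⊆ w ∧ w ⊆ v ∪ {p | p ∈ L} := by
  induction L generalizing v w with
  | nil =>
    show DLPA.Rel Prog.skip v w ↔ _
    simp only [Prog.skip, DLPA.Rel]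
    constructor
    · rintro ⟨rfl, -⟩
      exact ⟨subset_rfl, fun p hp => Or.inl hp⟩
    · rintro ⟨h1, h2⟩
      refine ⟨subset_antisymm (fun p hp => ?_) h1, sat_top v⟩
      rcases h2 hp with h | h
      · exact h
      · simp at h
  | cons p ps ih =>
    rw [show mkTrueSome (p::ps) = Prog.seq ((Prog.add p).choice Prog.skip) (mkTrueSome ps) from rfl]
    simp only [DLPA.Rel]
    constructor
    · rintro ⟨u, hu, hrest⟩
      rw [ih] at hrest
      rcases hu with rfl | ⟨rfl, -⟩
      · refine ⟨fun q hq => hrest.1 (Or.inl hq), fun q hq => ?_⟩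
        rcases hrest.2 hq with (hq | rfl) | hq
        · exact Or.inl hq
        · exact Or.inr (by simp)
        · exact Or.inr (by simp; right; exact hq)
      · refine ⟨hrest.1, fun q hq => ?_⟩
        rcases hrest.2 hq with hq | hq
        · exact Or.inl hq
        · exact Or.inr (by simp; right; exact hq)
    · rintro ⟨h1, h2⟩
      by_cases hp : p ∈ w
      · refine ⟨v ∪ {p}, Or.inl rfl, ?_⟩
        rw [ih]
        refine ⟨?_, fun q hq => ?_⟩
        · rintro q (hq | rfl)
          · exact h1 hq
          · exact hp
        · rcases h2 hq with hm | hm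
          · exact Or.inl (Or.inl hm)
          · simp at hm
            rcases hm with rfl | hm
            · exact Or.inl (Or.inr rfl)
            · exact Or.inr hm
      · refine ⟨v, Or.inr ⟨rfl, sat_top v⟩, ?_⟩
        rw [ih]
        refine ⟨h1, fun q hq => ?_⟩
        rcases h2 hq with hm | hm
        · exact Or.inl hm
        · simp at hm
          rcases hm with rfl | hm
          · exact absurd hq hp
          · exact Or.inr hm

lemma aw_mem_union_img {U : Type} (A : Set U) (R : Set (U × U)) (x : U) :
    PVar.aw x ∈ (PVar.aw '' A ∪ (fun q : U × U => PVar.att q.1 q.2) '' R) ↔ x ∈ A := by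
  simp

lemma att_mem_union_img {U : Type} (A : Set U) (R : Set (U × U)) (x y : U) :
    PVar.att x y ∈ (PVar.aw '' A ∪ (fun q : U × U => PVar.att q.1 q.2) '' R) ↔ (x, y) ∈ R := by
  simp

lemma mem_AWlist {U : Type} (A : Finset U) (q : PVar U) :
    q ∈ {p : PVar U | p ∈ AWlist A} ↔ ∃ x ∈ A, q = PVar.aw x := by
  simp [AWlist, eq_comm]

lemma mem_ATTlist {U : Type} (R : Finset (U × U)) (q : PVar U) :
    q ∈ {p : PVar U | p ∈ ATTlist R} ↔ ∃ r ∈ R, q = PVar.att r.1 r.2 := by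
  simp [ATTlist, eq_comm]

open DLPA in
/-- Proposition 2. -/
theorem makeComp_IAF_correct
    (U : Type) [Fintype U] [Nonempty U]
    (AF Aq : Finset U) (RF Rq : Finset (U × U))
    (hIAF : IAFConds (AF : Set U) (Aq : Set U) (RF : Set (U × U)) (Rq : Set (U × U))) :
    (∀ v : Val U,
        Rel (Prog.seq (mkTrueSome (AWlist Aq)) (mkTrueSome (ATTlist Rq)))
            (valOf (AF : Set U) (RF : Set (U × U))) v →
        IsCompletionOfIAF (AF : Set U) (Aq : Set U) (RF : Set (U × U)) (Rq : Set (U × U))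
          (Av v) (Rv v)) ∧
    (∀ (As : Set U) (Rs : Set (U × U)),
        IsCompletionOfIAF (AF : Set U) (Aq : Set U) (RF : Set (U × U)) (Rq : Set (U × U)) As Rs →
        ∃ v : Val U,
          Rel (Prog.seq (mkTrueSome (AWlist Aq)) (mkTrueSome (ATTlist Rq)))
              (valOf (AF : Set U) (RF : Set (U × U))) v ∧
          Av v = As ∧ Rv v = Rs) := by
  constructor
  · intro v hv
    obtain ⟨u, h1, h2⟩ := hv
    rw [mkTrueSome_iff] at h1 h2
    -- membership facts
    have hawv : ∀ x : U, PVar.aw x ∈ v → x ∈ AF ∨ x ∈ Aq := by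
      intro x hx
      rcases h2.2 hx with hx | hx
      · rcases h1.2 hx with hx | hx
        · rw [valOf, aw_mem_union_img] at hx; exact Or.inl hx
        · rw [mem_AWlist] at hx
          obtain ⟨y, hy, hxy⟩ := hx
          cases hxy; exact Or.inr hy
      · rw [mem_ATTlist] at hx
        obtain ⟨r, -, hr⟩ := hx
        exact absurd hr (by simp)
    have hattv : ∀ x y : U, PVar.att x y ∈ v → (x, y) ∈ RF ∨ (x, y) ∈ Rq := by
      intro x y hx
      rcases h2.2 hx with hx | hx
      · rcases h1.2 hx with hx | hx
        · rw [valOf, att_mem_union_img] at hx; exact Or.inl hx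
        · rw [mem_AWlist] at hx
          obtain ⟨z, -, hz⟩ := hx
          exact absurd hz (by simp)
      · rw [mem_ATTlist] at hx
        obtain ⟨r, hr, hrx⟩ := hx
        right
        have : r = (x, y) := by
          cases r; simpa [Prod.ext_iff, and_comm] using hrx.symm
        rwa [this] at hr
    have hsub : valOf (AF : Set U) (RF : Set (U × U)) ⊆ v := h1.1.trans h2.1
    refine ⟨?_, ?_, ?_, ?_⟩
    · intro x hx
      exact hsub ((aw_mem_union_img (AF : Set U) _ x).2 hx)
    · intro x hx
      exact hawv x hx
    · rintro ⟨x, y⟩ ⟨hr, hx, hy⟩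
      exact ⟨hx, hy, hsub ((att_mem_union_img _ (RF : Set (U × U)) x y).2 hr)⟩
    · rintro ⟨x, y⟩ ⟨hx, hy, hatt⟩
      refine ⟨?_, hx, hy⟩
      rcases hattv x y hatt with h | h
      · exact Or.inl h
      · exact Or.inr h
  · rintro As Rs ⟨hAs1, hAs2, hRs1, hRs2⟩
    refine ⟨PVar.aw '' As ∪ (fun q : U × U => PVar.att q.1 q.2) '' ((RF : Set (U × U)) ∪ Rs),
      ?_, ?_, ?_⟩
    · refine ⟨valOf (AF : Set U) (RF : Set (U × U)) ∪ PVar.aw '' As, ?_, ?_⟩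
      · rw [mkTrueSome_iff]
        refine ⟨Set.subset_union_left, ?_⟩
        rintro q (hq | ⟨x, hx, rfl⟩)
        · exact Or.inl hq
        · rcases hAs2 hx with hx' | hx'
          · exact Or.inl (Or.inl ⟨x, hx', rfl⟩)
          · exact Or.inr ((mem_AWlist Aq _).2 ⟨x, hx', rfl⟩)
      · rw [mkTrueSome_iff]
        constructor
        · rintro q (hq | hq)
          · rcases hq with ⟨x, hx, rfl⟩ | ⟨r, hr, rfl⟩
            · exact Or.inl ⟨x, hAs1 hx, rfl⟩
            · exact Or.inr ⟨r, Or.inl hr, rfl⟩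
          · exact Or.inl hq
        · rintro q (⟨x, hx, rfl⟩ | ⟨r, hr, rfl⟩)
          · exact Or.inl (Or.inr ⟨x, hx, rfl⟩)
          · rcases hr with hr | hr
            · exact Or.inl (Or.inl (Or.inr ⟨r, hr, rfl⟩))
            · rcases (hRs2 hr).1 with h | h
              · exact Or.inl (Or.inl (Or.inr ⟨r, h, rfl⟩))
              · exact Or.inr ((mem_ATTlist Rq _).2 ⟨r, h, rfl⟩)
    · ext x
      simp [Av]
    · ext ⟨x, y⟩
      simp only [Rv, Av, Set.mem_setOf_eq]
      constructor
      · rintro ⟨hx, hy, hatt⟩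
        rw [aw_mem_union_img] at hx hy
        rw [att_mem_union_img] at hatt
        rcases hatt with h | h
        · exact hRs1 ⟨h, hx, hy⟩
        · exact h
      · intro h
        have hmem := hRs2 h
        refine ⟨?_, ?_, ?_⟩
        · rw [aw_mem_union_img]; exact hmem.2.1
        · rw [aw_mem_union_img]; exact hmem.2.2
        · rw [att_mem_union_img]; exact Or.inr h
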